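/- arXiv:2211.08205 — 2 statements merged into one kernel-verified Lean document; each statement's English description precedes it below -/
import Mathlib

section
/- Let ε ~ N(0,1) and ρ(z) = -(f(z)^α - 1)/α with f the standard Gaussian density and α > 0. Then l(x) = E[ρ(ε + x) - ρ(ε)] = (1/α)(1+α)^{-1/2}(2π)^{-α/2}(1 - exp(-α x²/(2(1+α)))), which satisfies l(0) = 0 and l(x) > 0 for all x ≠ 0. -/
open Real Filter MeasureTheory ProbabilityTheory

/-- The standard Gaussian density. -/
noncomputable def gaussDensity (z : ℝ) : ℝ :=
  (Real.sqrt (2 * Real.pi))⁻¹ * Real.exp (-z ^ 2 / 2)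

/-- The robust loss ρ_α(z) = -((f(z)^α - 1)/α). -/
noncomputable def rhoα (α : ℝ) (z : ℝ) : ℝ := -((gaussDensity z ^ α - 1) / α)

/-!
Since `ρ_α(ε + x) - ρ_α(ε) = (f(ε)^α - f(ε + x)^α) / α`, everything reduces to the integral
`∫ f(z) f(z + x)^α dz`. Completing the square turns the integrand into a multiple of the
Gaussian `exp(-(1 + α)/2 · (z + αx/(1 + α))²)`, times the factor `exp(-αx²/(2(1 + α)))`;
translation invariance and `∫ exp(-b z²) = √(π / b)` then give the closed form, which is positive
away from `0` because that factor is `< 1` there.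
-/

lemma gaussianPDFReal_zero_one (z : ℝ) : gaussianPDFReal 0 1 z = gaussDensity z := by
  simp [gaussianPDFReal, gaussDensity]

lemma gaussDensity_rpow (α z : ℝ) :
    gaussDensity z ^ α = (2 * π) ^ (-α / 2) * exp (-(α * z ^ 2) / 2) := by
  have hπ : 0 ≤ 2 * π := by positivity
  rw [gaussDensity, mul_rpow (by positivity) (exp_pos _).le, sqrt_eq_rpow, ← rpow_neg hπ,
    ← rpow_mul hπ, ← exp_mul]
  congr 2 <;> ring

lemma integrable_gaussDensity_rpow_comp_add {μ : Measure ℝ} [IsFiniteMeasure μ] {α : ℝ}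
    (hα : 0 ≤ α) (x : ℝ) : Integrable (fun z => gaussDensity (z + x) ^ α) μ := by
  have hcont : Continuous fun z => gaussDensity (z + x) ^ α := by
    simp only [gaussDensity_rpow]
    fun_prop
  refine (integrable_const ((2 * π) ^ (-α / 2))).mono' hcont.aestronglyMeasurable
    (ae_of_all _ fun z => ?_)
  rw [norm_eq_abs, gaussDensity_rpow, abs_of_nonneg (by positivity)]
  refine mul_le_of_le_one_right (by positivity) (exp_le_one_iff.2 ?_)
  have : 0 ≤ α * (z + x) ^ 2 := by positivity
  linarith

lemma gaussDensity_mul_rpow_comp_add {α : ℝ} (hα : 1 + α ≠ 0) (x z : ℝ) :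
    gaussDensity z * gaussDensity (z + x) ^ α =
      ((√(2 * π))⁻¹ * (2 * π) ^ (-α / 2) * exp (-(α * x ^ 2) / (2 * (1 + α)))) *
        exp (-((1 + α) / 2) * (z + α * x / (1 + α)) ^ 2) := by
  have hsquare : -z ^ 2 / 2 + -(α * (z + x) ^ 2) / 2 =
      -(α * x ^ 2) / (2 * (1 + α)) + -((1 + α) / 2) * (z + α * x / (1 + α)) ^ 2 := by
    field_simp
    ring
  calc gaussDensity z * gaussDensity (z + x) ^ α
      = (√(2 * π))⁻¹ * (2 * π) ^ (-α / 2) * exp (-z ^ 2 / 2 + -(α * (z + x) ^ 2) / 2) := by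
        rw [gaussDensity_rpow, gaussDensity, exp_add]
        ring
    _ = _ := by
        rw [hsquare, exp_add]
        ring

lemma integral_gaussDensity_mul_rpow_comp_add {α : ℝ} (hα : -1 < α) (x : ℝ) :
    ∫ z, gaussDensity z * gaussDensity (z + x) ^ α =
      (1 + α) ^ (-(1 : ℝ) / 2) * (2 * π) ^ (-α / 2) * exp (-(α * x ^ 2) / (2 * (1 + α))) := by
  have h1α : 0 < 1 + α := by linarith
  have hsqrt : (√(2 * π))⁻¹ * √(π / ((1 + α) / 2)) = (1 + α) ^ (-(1 : ℝ) / 2) := by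
    rw [show π / ((1 + α) / 2) = 2 * π / (1 + α) by field_simp, sqrt_div (by positivity),
      show (-(1 : ℝ) / 2) = -(1 / 2) by norm_num, rpow_neg h1α.le, ← sqrt_eq_rpow]
    field_simp
  simp_rw [gaussDensity_mul_rpow_comp_add h1α.ne']
  rw [integral_const_mul, integral_add_right_eq_self (fun z => exp (-((1 + α) / 2) * z ^ 2)),
    integral_gaussian, ← hsqrt]
  ring

lemma rhoα_sub_rhoα (α a b : ℝ) :
    rhoα α a - rhoα α b = α⁻¹ * (gaussDensity b ^ α - gaussDensity a ^ α) := by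
  unfold rhoα
  ring

lemma integral_rhoα_comp_add_sub_rhoα {α : ℝ} (hα : 0 < α) (x : ℝ) :
    ∫ z, (rhoα α (z + x) - rhoα α z) ∂(gaussianReal 0 1) =
      (1 / α) * (1 + α) ^ (-(1 : ℝ) / 2) * (2 * π) ^ (-α / 2) *
        (1 - exp (-(α * x ^ 2) / (2 * (1 + α)))) := by
  have hint (y : ℝ) := integrable_gaussDensity_rpow_comp_add (μ := gaussianReal 0 1) hα.le y
  have hint0 : Integrable (fun z => gaussDensity z ^ α) (gaussianReal 0 1) := by
    simpa using hint 0
  simp_rw [rhoα_sub_rhoα]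
  rw [integral_const_mul, integral_sub hint0 (hint x),
    integral_gaussianReal_eq_integral_smul one_ne_zero,
    integral_gaussianReal_eq_integral_smul one_ne_zero]
  simp only [smul_eq_mul, gaussianPDFReal_zero_one]
  have hzero := integral_gaussDensity_mul_rpow_comp_add (by linarith : -1 < α) 0
  simp only [add_zero, zero_pow two_ne_zero, mul_zero, zero_div, neg_zero, exp_zero,
    mul_one] at hzero
  rw [hzero, integral_gaussDensity_mul_rpow_comp_add (by linarith) x]
  ring

theorem stmt5 (α : ℝ) (hα : 0 < α) :
    let l : ℝ → ℝ := fun x => ∫ z, (rhoα α (z + x) - rhoα α z) ∂(gaussianReal 0 1)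
    (∀ x : ℝ, l x = (1 / α) * (1 + α) ^ (-(1 : ℝ) / 2) * (2 * Real.pi) ^ (-α / 2) *
        (1 - Real.exp (-(α * x ^ 2) / (2 * (1 + α))))) ∧
    l 0 = 0 ∧ ∀ x : ℝ, x ≠ 0 → 0 < l x := by
  intro l
  have hl (x : ℝ) := integral_rhoα_comp_add_sub_rhoα hα x
  refine ⟨hl, by simp [l, hl], fun x hx => ?_⟩
  simp only [l, hl]
  have hexp : exp (-(α * x ^ 2) / (2 * (1 + α))) < 1 :=
    exp_lt_one_iff.2 (div_neg_of_neg_of_pos (neg_neg_of_pos (by positivity)) (by positivity))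
  exact mul_pos (by positivity) (sub_pos.2 hexp)
end

section
/- Let f be the standard Gaussian density and α > 0. Then η ↦ E_{Z~N(0,1)}[ρ_α(Z + m)] with ρ_α(z) = -(f(z)^α - 1)/α is uniquely minimized over m ∈ ℝ at m = 0 (Fisher consistency of the location M-estimator based on ρ_α). -/
open Real MeasureTheory ProbabilityTheory

/-!
Writing `ρ_α = (1 - f^α)/α`, the expected loss is `(1 - J(m))/α` with
`J(m) = ∫ f(z) f(z + m)^α dz`. Since `f^α` is again a Gaussian kernel, `J(m)` is the integral of a
product of two Gaussians, which completing the square evaluates to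
`K · exp(-α m² / (2(1 + α)))` with `K > 0`; this is strictly largest at `m = 0`.
-/

theorem integral_exp_neg_mul_sq_mul_exp_neg_mul_sq_add {a b : ℝ} (hab : a + b ≠ 0) (m : ℝ) :
    ∫ z, rexp (-a * z ^ 2) * rexp (-b * (z + m) ^ 2) =
      √(π / (a + b)) * rexp (-(a * b / (a + b)) * m ^ 2) := by
  have hsq (z : ℝ) : rexp (-a * z ^ 2) * rexp (-b * (z + m) ^ 2) =
      rexp (-(a * b / (a + b)) * m ^ 2) * rexp (-(a + b) * (z + b * m / (a + b)) ^ 2) := by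
    rw [← exp_add, ← exp_add]
    congr 1
    field_simp
    ring
  simp_rw [hsq]
  rw [integral_const_mul, integral_add_right_eq_self (fun z ↦ rexp (-(a + b) * z ^ 2)),
    integral_gaussian, mul_comm]

theorem gaussDensity_eq_gaussianPDFReal : gaussDensity = gaussianPDFReal 0 1 := by
  ext z
  simp [gaussDensity, gaussianPDFReal]

theorem gaussDensity_nonneg (z : ℝ) : 0 ≤ gaussDensity z := by
  unfold gaussDensity
  positivity

theorem gaussDensity_le_one (z : ℝ) : gaussDensity z ≤ 1 := by
  have h2π : 1 ≤ √(2 * π) := one_le_sqrt.mpr (by linarith [pi_gt_three])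
  have hexp : rexp (-z ^ 2 / 2) ≤ 1 := exp_le_one_iff.mpr (by nlinarith [sq_nonneg z])
  calc gaussDensity z = (√(2 * π))⁻¹ * rexp (-z ^ 2 / 2) := rfl
    _ ≤ 1 * 1 := by gcongr; exact inv_le_one_of_one_le₀ h2π
    _ = 1 := one_mul 1

theorem continuous_gaussDensity : Continuous gaussDensity := by
  unfold gaussDensity
  fun_prop

theorem integral_gaussianReal_eq_integral_gaussDensity_mul (g : ℝ → ℝ) :
    ∫ z, g z ∂gaussianReal 0 1 = ∫ z, gaussDensity z * g z := by
  rw [integral_gaussianReal_eq_integral_smul one_ne_zero, gaussDensity_eq_gaussianPDFReal]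
  rfl

theorem gaussDensity_mul_gaussDensity_add_rpow (α m z : ℝ) :
    gaussDensity z * gaussDensity (z + m) ^ α =
      (√(2 * π))⁻¹ * ((√(2 * π))⁻¹) ^ α *
        (rexp (-(1 / 2) * z ^ 2) * rexp (-(α / 2) * (z + m) ^ 2)) := by
  unfold gaussDensity
  rw [mul_rpow (by positivity) (exp_pos _).le, ← exp_mul]
  ring_nf

theorem integral_gaussDensity_mul_gaussDensity_add_rpow {α : ℝ} (hα : 0 < α) (m : ℝ) :
    ∫ z, gaussDensity z * gaussDensity (z + m) ^ α =
      (√(2 * π))⁻¹ * ((√(2 * π))⁻¹) ^ α * √(π / ((1 + α) / 2)) *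
        rexp (-(α / (2 * (1 + α))) * m ^ 2) := by
  have hsum : (1 : ℝ) / 2 + α / 2 = (1 + α) / 2 := by ring
  simp_rw [gaussDensity_mul_gaussDensity_add_rpow, integral_const_mul]
  rw [integral_exp_neg_mul_sq_mul_exp_neg_mul_sq_add (by positivity), hsum]
  field_simp

theorem integral_gaussDensity_mul_gaussDensity_add_rpow_lt {α m : ℝ} (hα : 0 < α) (hm : m ≠ 0) :
    ∫ z, gaussDensity z * gaussDensity (z + m) ^ α <
      ∫ z, gaussDensity z * gaussDensity (z + 0) ^ α := by
  simp_rw [integral_gaussDensity_mul_gaussDensity_add_rpow hα]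
  have hK : 0 < (√(2 * π))⁻¹ * ((√(2 * π))⁻¹) ^ α * √(π / ((1 + α) / 2)) := by
    have : 0 < √(π / ((1 + α) / 2)) := sqrt_pos.mpr (by positivity)
    positivity
  refine mul_lt_mul_of_pos_left (exp_lt_exp.mpr ?_) hK
  have : 0 < α / (2 * (1 + α)) := by positivity
  have : 0 < m ^ 2 := by positivity
  nlinarith

theorem integral_rhoα_add {α : ℝ} (hα : 0 < α) (m : ℝ) :
    ∫ z, rhoα α (z + m) ∂gaussianReal 0 1 =
      (1 - ∫ z, gaussDensity z * gaussDensity (z + m) ^ α) / α := by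
  have hint : Integrable (fun z ↦ gaussDensity (z + m) ^ α) (gaussianReal 0 1) := by
    refine .of_bound (((continuous_gaussDensity.comp (continuous_add_const m)).rpow_const
      fun _ ↦ .inr hα.le).aestronglyMeasurable) 1 (ae_of_all _ fun z ↦ ?_)
    rw [norm_of_nonneg (rpow_nonneg (gaussDensity_nonneg _) _)]
    exact rpow_le_one (gaussDensity_nonneg _) (gaussDensity_le_one _) hα.le
  have hρ : (fun z ↦ rhoα α (z + m)) = fun z ↦ α⁻¹ - α⁻¹ * gaussDensity (z + m) ^ α := by
    ext z
    simp only [rhoα]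
    ring
  rw [hρ, integral_sub (integrable_const _) (hint.const_mul _), integral_const, probReal_univ,
    one_smul, integral_const_mul, integral_gaussianReal_eq_integral_gaussDensity_mul]
  field_simp

/-- Fisher consistency of the location M-estimator based on ρ_α: the expected loss
m ↦ E[ρ_α(Z + m)] under Z ~ N(0,1) is uniquely minimized at m = 0. -/
theorem stmt19 (α : ℝ) (hα : 0 < α) :
    ∀ m : ℝ, m ≠ 0 →
      (∫ z, rhoα α (z + 0) ∂(gaussianReal 0 1)) <
        ∫ z, rhoα α (z + m) ∂(gaussianReal 0 1) := by
  intro m hm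
  rw [integral_rhoα_add hα, integral_rhoα_add hα]
  gcongr
  exact integral_gaussDensity_mul_gaussDensity_add_rpow_lt hα hm
end
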